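/- Let (S_1, …, S_{n+1}) be an exchangeable sequence of random variables with values in the extended real line [−∞, +∞], and let k be an integer with 1 ≤ k ≤ n+1. Then P(S_{n+1} ≤ OS_k(S_1, …, S_{n+1})) ≥ k / (n+1), where OS_k(S_1, …, S_{n+1}) denotes the k-th smallest value of the multiset {S_1, …, S_{n+1}} (a random variable). This bound holds regardless of whether ties exist among the scores. -/

import Mathlib

open MeasureTheory

/-- A finite sequence of random variables `Z : Fin m → Ω → α` is exchangeable
(w.r.t. the probability measure `μ`) if for every permutation `σ` of `Fin m`,
the joint law of the permuted sequence equals the joint law of the original one. -/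
def Exchangeable {Ω α : Type*} [MeasurableSpace Ω] [MeasurableSpace α] {m : ℕ}
    (μ : Measure Ω) (Z : Fin m → Ω → α) : Prop :=
  ∀ σ : Equiv.Perm (Fin m),
    Measure.map (fun ω => fun i => Z (σ i) ω) μ = Measure.map (fun ω => fun i => Z i ω) μ

/-- The `k`-th order statistic (0-indexed: `k : Fin m` gives the `(k+1)`-th smallest
element, counted with multiplicity) of the values `s 0, …, s (m-1)`. -/
noncomputable def orderStat {α : Type*} [LinearOrder α] {m : ℕ}
    (s : Fin m → α) (k : Fin m) : α :=
  s (Tuple.sort s k)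

/-! Let `A i` be the event that the `i`-th score is at most the `k`-th order statistic. Every
outcome lies in at least `k` of these events (those of the indices carrying the `k` smallest
scores), so `∑ i, P(A i) ≥ k`. The order statistic is a symmetric function of the scores, so a
transposition exchanging `i` with the last index maps `A i` to `A last`, and exchangeability
gives `P(A i) = P(A last)` for every `i`; hence `(n + 1) P(A last) ≥ k`. -/

open scoped ENNReal

open Finset

section OrderStat

variable {α : Type*} [LinearOrder α] {m : ℕ}

theorem orderStat_comp_perm (s : Fin m → α) (σ : Equiv.Perm (Fin m)) (c : Fin m) :
    orderStat (s ∘ σ) c = orderStat s c :=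
  congrFun Tuple.comp_perm_comp_sort_eq_comp_sort c

theorem orderStat_mono (s : Fin m → α) {a b : Fin m} (hab : a ≤ b) :
    orderStat s a ≤ orderStat s b :=
  Tuple.monotone_sort s hab

theorem le_orderStat_iff_card_lt (s : Fin m → α) (i c : Fin m) :
    s i ≤ orderStat s c ↔ #{j | s j < s i} ≤ c := by
  constructor
  · intro hle
    calc #{j | s j < s i} ≤ #(Iio c) := by
          refine card_le_card_of_injOn (Tuple.sort s).symm (fun j hj => ?_)
            (Tuple.sort s).symm.injective.injOn
          simp only [coe_filter, mem_univ, true_and, Set.mem_ofPred_eq, coe_Iio,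
            Set.mem_Iio] at hj ⊢
          by_contra! hcj
          have := orderStat_mono s hcj
          simp only [orderStat, Equiv.apply_symm_apply] at this
          exact (hj.trans_le hle).not_ge this
      _ = c := Fin.card_Iio c
  · intro hcard
    by_contra! hlt
    have : #(Iic c) ≤ #{j | s j < s i} :=
      card_le_card_of_injOn (Tuple.sort s)
        (fun a ha => by simpa [orderStat] using (orderStat_mono s (mem_Iic.mp ha)).trans_lt hlt)
        (Tuple.sort s).injective.injOn
    rw [Fin.card_Iic] at this
    omega

theorem succ_le_card_le_orderStat (s : Fin m → α) (c : Fin m) :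
    (c : ℕ) + 1 ≤ #{i | s i ≤ orderStat s c} := by
  rw [← Fin.card_Iic]
  exact card_le_card_of_injOn (Tuple.sort s)
    (fun a ha => by
      simp only [coe_filter, mem_univ, true_and, Set.mem_ofPred_eq]
      exact orderStat_mono s (mem_Iic.mp ha))
    (Tuple.sort s).injective.injOn

theorem measurableSet_le_orderStat [TopologicalSpace α] [MeasurableSpace α]
    [OpensMeasurableSpace α] [SecondCountableTopology α] [OrderClosedTopology α] (i c : Fin m) :
    MeasurableSet {s : Fin m → α | s i ≤ orderStat s c} := by
  simp only [le_orderStat_iff_card_lt, card_filter]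
  refine measurableSet_le (Finset.measurable_sum _ fun j _ => ?_) measurable_const
  exact Measurable.ite (measurableSet_lt (measurable_pi_apply j) (measurable_pi_apply i))
    measurable_const measurable_const

end OrderStat

theorem mul_measure_univ_le_sum_measure {Ω ι : Type*} [MeasurableSpace Ω] [Fintype ι]
    (μ : Measure Ω) {A : ι → Set Ω} [∀ i, DecidablePred (· ∈ A i)]
    (hA : ∀ i, NullMeasurableSet (A i) μ) {k : ℕ}
    (hk : ∀ ω, k ≤ #{i | ω ∈ A i}) :
    k * μ Set.univ ≤ ∑ i, μ (A i) :=
  calc k * μ Set.univ = ∫⁻ _, (k : ℝ≥0∞) ∂μ := (lintegral_const _).symm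
    _ ≤ ∫⁻ ω, ∑ i, (A i).indicator (fun _ => 1) ω ∂μ := lintegral_mono fun ω => by
          simp only [Set.indicator_apply, sum_boole]
          exact_mod_cast hk ω
    _ = ∑ i, μ (A i) := by
          rw [lintegral_finsetSum' _ fun i _ => aemeasurable_one.indicator₀ (hA i)]
          exact sum_congr rfl fun i _ => lintegral_indicator_one₀ (hA i)

namespace Exchangeable

variable {Ω α : Type*} [MeasurableSpace Ω] [MeasurableSpace α] {m : ℕ} {μ : Measure Ω}
  {Z : Fin m → Ω → α}

theorem measure_preimage_comp_perm (hZ : Exchangeable μ Z) (hmeas : ∀ i, Measurable (Z i))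
    (σ : Equiv.Perm (Fin m)) {B : Set (Fin m → α)} (hB : MeasurableSet B) :
    μ ((fun ω i => Z (σ i) ω) ⁻¹' B) = μ ((fun ω i => Z i ω) ⁻¹' B) := by
  rw [← Measure.map_apply (measurable_pi_lambda _ fun i => hmeas (σ i)) hB, hZ σ,
    Measure.map_apply (measurable_pi_lambda _ hmeas) hB]

theorem measure_le_orderStat_eq [LinearOrder α] [TopologicalSpace α] [OpensMeasurableSpace α]
    [SecondCountableTopology α] [OrderClosedTopology α] (hZ : Exchangeable μ Z)
    (hmeas : ∀ i, Measurable (Z i)) (c i j : Fin m) :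
    μ {ω | Z i ω ≤ orderStat (fun l => Z l ω) c} =
      μ {ω | Z j ω ≤ orderStat (fun l => Z l ω) c} := by
  have key := hZ.measure_preimage_comp_perm hmeas (Equiv.swap i j)
    (measurableSet_le_orderStat i c)
  have hswap : (fun ω l => Z (Equiv.swap i j l) ω) ⁻¹' {s | s i ≤ orderStat s c} =
      {ω | Z j ω ≤ orderStat (fun l => Z l ω) c} := by
    ext ω
    simp only [Set.mem_preimage, Set.mem_ofPred_eq, Equiv.swap_apply_left]
    rw [← Function.comp_def (fun l => Z l ω), orderStat_comp_perm]
  rw [hswap] at key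
  exact key.symm

end Exchangeable

/-- Rank coverage under exchangeability: for an exchangeable sequence
`(S 1, …, S (n+1))` of extended-real random variables and `1 ≤ k ≤ n+1`, the last
score is at or below the `k`-th order statistic of all `n+1` scores with probability
at least `k / (n+1)`, regardless of ties. -/
theorem prob_last_le_orderStat
    {Ω : Type*} [MeasurableSpace Ω] {n : ℕ}
    (μ : Measure Ω) [IsProbabilityMeasure μ]
    (S : Fin (n + 1) → Ω → EReal) (hSmeas : ∀ i, Measurable (S i))
    (hexch : Exchangeable μ S)
    (k : ℕ) (hk1 : 1 ≤ k) (hk2 : k ≤ n + 1) :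
    (k : ENNReal) / (n + 1) ≤
      μ {ω | S (Fin.last n) ω ≤ orderStat (fun i => S i ω) ⟨k - 1, by omega⟩} := by
  set c : Fin (n + 1) := ⟨k - 1, by omega⟩
  set A : Fin (n + 1) → Set Ω := fun i => {ω | S i ω ≤ orderStat (fun l => S l ω) c}
  have hcount : (k : ℝ≥0∞) ≤ ∑ i, μ (A i) := by
    have hA i : NullMeasurableSet (A i) μ :=
      (measurableSet_le_orderStat i c |>.preimage (measurable_pi_lambda _ hSmeas)).nullMeasurableSet
    have hk ω : k ≤ #{i | ω ∈ A i} :=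
      calc k = (c : ℕ) + 1 := by simp only [c]; omega
        _ ≤ #{i | ω ∈ A i} := succ_le_card_le_orderStat (fun l => S l ω) c
    simpa using mul_measure_univ_le_sum_measure μ hA hk
  have hsum : ∑ i, μ (A i) = (n + 1) * μ (A (Fin.last n)) := by
    rw [sum_congr rfl fun i _ => hexch.measure_le_orderStat_eq hSmeas c i (Fin.last n)]
    simp [A, add_mul]
  exact ENNReal.div_le_of_le_mul' (hcount.trans_eq hsum)
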